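/- Let ℜ = (S,(𝒦,𝒢),(X,ℬ),(ℱ,𝒯)) be a Riesz system, Z a uniform commutative monoid, and ℓ : ℱ → Z a Riesz integral over ℜ. Then τ_ℓ is additive: for all disjoint κ₁,κ₂∈𝒦 and all x∈X, τ_ℓ(κ₁∪κ₂, x) = τ_ℓ(κ₁, x) + τ_ℓ(κ₂, x). -/

import Mathlib

open Filter Set Topology
open scoped Pointwise

universe u v w

/-- A member of `unif M`: a closed, translation-invariant, symmetric entourage of the
uniform commutative monoid `M`. -/
def IsUnifEnt (M : Type*) [AddCommMonoid M] [UniformSpace M] (W : Set (M × M)) : Prop :=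
  W ∈ uniformity M ∧ IsClosed W ∧
    (∀ p ∈ W, ∀ t : M, (p.1 + t, p.2 + t) ∈ W) ∧ ∀ p ∈ W, (p.2, p.1) ∈ W

/-- `f` is supported by `α` (written `f ≺ α`): `f` vanishes off some `κ ∈ 𝒦` with `κ ⊆ α`. -/
def SupportedBy {S : Type u} {X : Type v} [Zero X]
    (𝒦 : Set (Set S)) (f : S → X) (α : Set S) : Prop :=
  ∃ κ ∈ 𝒦, κ ⊆ α ∧ ∀ s ∉ κ, f s = 0

/-- `f` equals `x` over `α`: `f` is identically `x` on some `γ ∈ 𝒢` containing `α`. -/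
def EqualsOver {S : Type u} {X : Type v}
    (𝒢 : Set (Set S)) (f : S → X) (x : X) (α : Set S) : Prop :=
  ∃ γ ∈ 𝒢, α ⊆ γ ∧ ∀ s ∈ γ, f s = x

/-- `ℱ_B`: members of `ℱ` with range contained in `B`. -/
def FB {S : Type u} {X : Type v} (ℱ : Set (S → X)) (B : Set X) : Set (S → X) :=
  {f | f ∈ ℱ ∧ Set.range f ⊆ B}

/-- the `ℬ`-hull of `x`: intersection of all members of `ℬ` containing `x`. -/
def BHull {X : Type v} (ℬ : Set (Set X)) (x : X) : Set X :=
  ⋂₀ {B | B ∈ ℬ ∧ x ∈ B}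

/-- the `ℬ`-hull of a subset `A` of `X`. -/
def BHullS {X : Type v} (ℬ : Set (Set X)) (A : Set X) : Set X :=
  ⋂₀ {B | B ∈ ℬ ∧ A ⊆ B}

/-- A field of subsets of `S`. -/
def IsSetField {S : Type u} (ℰ : Set (Set S)) : Prop :=
  Set.univ ∈ ℰ ∧ (∀ A ∈ ℰ, Aᶜ ∈ ℰ) ∧ ∀ A ∈ ℰ, ∀ B ∈ ℰ, A ∪ B ∈ ℰ

/-- `ℰ`: the smallest field of subsets of `S` containing `𝒦 ∪ 𝒢`. -/
def genField {S : Type u} (𝒦 𝒢 : Set (Set S)) : Set (Set S) :=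
  ⋂₀ {ℰ | 𝒦 ∪ 𝒢 ⊆ ℰ ∧ IsSetField ℰ}

/-- A Riesz system `(S,(𝒦,𝒢),(X,ℬ),(ℱ,𝒯))` (Assumptions 2.3 of the paper). -/
structure RieszSystem {S : Type u} {X : Type v} [AddCommMonoid X] [UniformSpace X]
    (𝒦 𝒢 : Set (Set S)) (ℬ : Set (Set X)) (ℱ : Set (S → X))
    (𝒯 : Filter ((S → X) × (S → X))) : Prop where
  K_empty : ∅ ∈ 𝒦
  K_union : ∀ κ₁ ∈ 𝒦, ∀ κ₂ ∈ 𝒦, κ₁ ∪ κ₂ ∈ 𝒦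
  G_empty : ∅ ∈ 𝒢
  G_union : ∀ γ₁ ∈ 𝒢, ∀ γ₂ ∈ 𝒢, γ₁ ∪ γ₂ ∈ 𝒢
  G_inter : ∀ γ₁ ∈ 𝒢, ∀ γ₂ ∈ 𝒢, γ₁ ∩ γ₂ ∈ 𝒢
  KG_diff : ∀ κ ∈ 𝒦, ∀ γ ∈ 𝒢, κ \ γ ∈ 𝒦 ∧ γ \ κ ∈ 𝒢
  KG_interpose : ∀ κ ∈ 𝒦, ∀ γ ∈ 𝒢, κ ⊆ γ →
      ∃ γ' ∈ 𝒢, ∃ κ' ∈ 𝒦, κ ⊆ γ' ∧ γ' ⊆ κ' ∧ κ' ⊆ γ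
  X_add : UniformContinuous fun p : X × X => p.1 + p.2
  B_nonempty : ℬ.Nonempty
  B_inter : ∀ 𝒞 ⊆ ℬ, 𝒞.Nonempty → ⋂₀ 𝒞 ∈ ℬ
  B_zero : ∀ B ∈ ℬ, (0 : X) ∈ B
  B_add : ∀ B ∈ ℬ, ∀ B' ∈ ℬ, ∃ C ∈ ℬ, B + B' ⊆ C
  B_cover : ∀ x : X, ∃ B ∈ ℬ, x ∈ B
  F_zero : (0 : S → X) ∈ ℱ
  F_add : ∀ f ∈ ℱ, ∀ g ∈ ℱ, f + g ∈ ℱ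
  T_refl : ∀ T ∈ 𝒯, ∀ f ∈ ℱ, (f, f) ∈ T
  T_symm : ∀ T ∈ 𝒯, ∃ V ∈ 𝒯, ∀ f g : S → X, (f, g) ∈ V → (g, f) ∈ T
  T_comp : ∀ T ∈ 𝒯, ∃ V ∈ 𝒯, ∀ f g h : S → X, (f, g) ∈ V → (g, h) ∈ V → (f, h) ∈ T
  T_add : ∀ T ∈ 𝒯, ∃ V ∈ 𝒯, ∀ f f' g g' : S → X,
      (f, f') ∈ V → (g, g') ∈ V → (f + g, f' + g') ∈ T
  F_range : ∀ f ∈ ℱ, ∃ B ∈ ℬ, Set.range f ⊆ B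
  F_partble : ∀ f ∈ ℱ, ∀ W ∈ uniformity X, ∃ G : Finset (Set S), ↑G ⊆ 𝒢 ∧
      (⋃ γ ∈ G, γ) = Set.univ ∧ ∀ γ ∈ G, ∀ s ∈ γ, ∀ t ∈ γ, (f s, f t) ∈ W
  F_urysohn : ∀ κ ∈ 𝒦, ∀ γ ∈ 𝒢, κ ⊆ γ → ∀ x : X, ∃ f ∈ ℱ,
      Set.range f ⊆ BHull ℬ x ∧ SupportedBy 𝒦 f γ ∧ EqualsOver 𝒢 f x κ
  F_ext : ∀ B ∈ ℬ, ∀ T ∈ 𝒯, ∃ U ∈ uniformity X, ∀ κ ∈ 𝒦, ∀ γ ∈ 𝒢, κ ⊆ γ →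
      ∀ f ∈ FB ℱ B, ∀ g ∈ FB ℱ B, SupportedBy 𝒦 f γ → SupportedBy 𝒦 g γ →
      (∃ ω ∈ 𝒢, κ ⊆ ω ∧ ω ⊆ γ ∧ ∀ s ∈ ω, (f s, g s) ∈ U) →
      ∃ p ∈ FB ℱ B, ∃ q ∈ FB ℱ B, SupportedBy 𝒦 p (γ \ κ) ∧
        SupportedBy 𝒦 q (γ \ κ) ∧ (f + p, g + q) ∈ T
  F_partunity : ∀ B ∈ ℬ, ∀ G : Finset (Set S), ↑G ⊆ 𝒢 → ∀ κ ∈ 𝒦, κ ⊆ (⋃ γ ∈ G, γ) →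
      ∀ f ∈ FB ℱ B, ∃ g : Set S → (S → X),
        (∀ γ ∈ G, g γ ∈ FB ℱ B ∧ SupportedBy 𝒦 (g γ) γ) ∧
        (∀ J : Finset (Set S), J ⊆ G → (∑ γ ∈ J, g γ) ∈ FB ℱ B) ∧
        ∀ s ∈ κ, f s = ∑ γ ∈ G, g γ s

/-- `f` and `g` are `ℰ`-separated. -/
def ESeparated {S : Type u} {X : Type v} [Zero X]
    (𝒦 𝒢 : Set (Set S)) (f g : S → X) : Prop :=
  ∃ E₁ ∈ genField 𝒦 𝒢, ∃ E₂ ∈ genField 𝒦 𝒢, Disjoint E₁ E₂ ∧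
    SupportedBy 𝒦 f E₁ ∧ SupportedBy 𝒦 g E₂

/-- `ℓ` is `ℰ`-additive. -/
def EAdditive {S : Type u} {X : Type v} {Z : Type w} [AddCommMonoid X] [AddCommMonoid Z]
    (𝒦 𝒢 : Set (Set S)) (ℱ : Set (S → X)) (ℓ : (S → X) → Z) : Prop :=
  ∀ f ∈ ℱ, ∀ g ∈ ℱ, ESeparated 𝒦 𝒢 f g → ℓ (f + g) = ℓ f + ℓ g

/-- `ℓ` is `s`-bounded over `ℬ`. -/
def SBounded {S : Type u} {X : Type v} {Z : Type w} [AddCommMonoid X]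
    [AddCommMonoid Z] [UniformSpace Z]
    (𝒦 𝒢 : Set (Set S)) (ℬ : Set (Set X)) (ℱ : Set (S → X)) (ℓ : (S → X) → Z) : Prop :=
  ∀ B ∈ ℬ, ∀ W : Set (Z × Z), IsUnifEnt Z W → ∀ G : ℕ → Set S, (∀ n, G n ∈ 𝒢) →
    (∀ m n : ℕ, m ≠ n → Disjoint (G m) (G n)) → ∃ m : ℕ, ∀ n > m,
      ∀ f ∈ FB ℱ B, ∀ g ∈ FB ℱ B, SupportedBy 𝒦 g (G n) → (ℓ f, ℓ (f + g)) ∈ W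

/-- `ℓ` is uniformly continuous on `A` with respect to the uniformity `𝒯`. -/
def UContOn {S : Type u} {X : Type v} {Z : Type w} [UniformSpace Z]
    (𝒯 : Filter ((S → X) × (S → X))) (A : Set (S → X)) (ℓ : (S → X) → Z) : Prop :=
  ∀ W ∈ uniformity Z, ∃ T ∈ 𝒯, ∀ f ∈ A, ∀ g ∈ A, (f, g) ∈ T → (ℓ f, ℓ g) ∈ W

/-- A relatively complete subset of a uniform space. -/
def RelComplete {Z : Type w} [UniformSpace Z] (A : Set Z) : Prop :=
  IsComplete (closure A)

/-- `ℓ` is a Riesz integral over the Riesz system `(S,(𝒦,𝒢),(X,ℬ),(ℱ,𝒯))`. -/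
def RieszIntegral {S : Type u} {X : Type v} {Z : Type w} [AddCommMonoid X]
    [AddCommMonoid Z] [UniformSpace Z]
    (𝒦 𝒢 : Set (Set S)) (ℬ : Set (Set X)) (ℱ : Set (S → X))
    (𝒯 : Filter ((S → X) × (S → X))) (ℓ : (S → X) → Z) : Prop :=
  EAdditive 𝒦 𝒢 ℱ ℓ ∧ SBounded 𝒦 𝒢 ℬ ℱ ℓ ∧
    ∀ B ∈ ℬ, UContOn 𝒯 (FB ℱ B) ℓ ∧ RelComplete (ℓ '' FB ℱ B)

/-- The members of a finite family of sets are pairwise disjoint. -/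
def PairwiseDisjFinset {S : Type u} (K : Finset (Set S)) : Prop :=
  ∀ κ₁ ∈ K, ∀ κ₂ ∈ K, κ₁ ≠ κ₂ → Disjoint κ₁ κ₂

/-- `α` is `W`-small with respect to `(h, B)`. -/
def WSmall {S : Type u} {X : Type v} {Z : Type w} [AddCommMonoid X] [AddCommMonoid Z]
    (𝒦 𝒢 : Set (Set S)) (h : Set S → X → Z) (B : Set X)
    (W : Set (Z × Z)) (α : Set S) : Prop :=
  ∃ γ ∈ 𝒢, α ⊆ γ ∧ ∀ K : Finset (Set S), ↑K ⊆ 𝒦 → PairwiseDisjFinset K →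
    (∀ κ ∈ K, κ ⊆ γ) → ∀ x y : Set S → X, (∀ κ ∈ K, x κ ∈ B) → (∀ κ ∈ K, y κ ∈ B) →
      (∑ κ ∈ K, h κ (x κ), ∑ κ ∈ K, h κ (x κ + y κ)) ∈ W

/-- `α` is regular with respect to `(h, 𝒦, 𝒢, ℬ)`. -/
def RegularSet {S : Type u} {X : Type v} {Z : Type w} [AddCommMonoid X]
    [AddCommMonoid Z] [UniformSpace Z]
    (𝒦 𝒢 : Set (Set S)) (ℬ : Set (Set X)) (h : Set S → X → Z) (α : Set S) : Prop :=
  ∀ B ∈ ℬ, ∀ V : Set (Z × Z), IsUnifEnt Z V →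
    ∃ κ ∈ 𝒦, ∃ γ ∈ 𝒢, κ ⊆ α ∧ α ⊆ γ ∧ WSmall 𝒦 𝒢 h B V (γ \ κ)

/-- `R_h`: the family of regular sets of `h`. -/
def RSet {S : Type u} {X : Type v} {Z : Type w} [AddCommMonoid X]
    [AddCommMonoid Z] [UniformSpace Z]
    (𝒦 𝒢 : Set (Set S)) (ℬ : Set (Set X)) (h : Set S → X → Z) : Set (Set S) :=
  {α | RegularSet 𝒦 𝒢 ℬ h α}

/-- `h` is uniformly partition continuous with respect to `(𝒦,𝒢,ℬ)`. -/
def UPartCont {S : Type u} {X : Type v} {Z : Type w} [AddCommMonoid X] [UniformSpace X]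
    [AddCommMonoid Z] [UniformSpace Z]
    (𝒦 𝒢 : Set (Set S)) (ℬ : Set (Set X)) (h : Set S → X → Z) : Prop :=
  ∀ W : Set (Z × Z), IsUnifEnt Z W → ∀ B ∈ ℬ, ∃ U ∈ uniformity X,
    ∀ R : Finset (Set S), ↑R ⊆ RSet 𝒦 𝒢 ℬ h → PairwiseDisjFinset R →
    ∀ x y : Set S → X, (∀ ρ ∈ R, x ρ ∈ B ∧ y ρ ∈ B ∧ (x ρ, y ρ) ∈ U) →
      (∑ ρ ∈ R, h ρ (x ρ), ∑ ρ ∈ R, h ρ (y ρ)) ∈ W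

/-- `h` is `s`-bounded with respect to `(𝒦,𝒢,ℬ)`. -/
def MSBounded {S : Type u} {X : Type v} {Z : Type w} [AddCommMonoid X]
    [AddCommMonoid Z] [UniformSpace Z]
    (𝒦 𝒢 : Set (Set S)) (ℬ : Set (Set X)) (h : Set S → X → Z) : Prop :=
  ∀ B ∈ ℬ, ∀ α : ℕ → Set S, (∀ n, α n ∈ RSet 𝒦 𝒢 ℬ h) →
    (∀ m n : ℕ, m ≠ n → Disjoint (α m) (α n)) → ∀ V : Set (Z × Z), IsUnifEnt Z V →
      ∃ m : ℕ, ∀ n > m, WSmall 𝒦 𝒢 h B V (α n)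

/-- `𝒱(h,𝒦,𝒢,B)`: all finite sums `∑_{ρ∈R} x_ρ.h(ρ)`. -/
def VSums {S : Type u} {X : Type v} {Z : Type w} [AddCommMonoid X]
    [AddCommMonoid Z] [UniformSpace Z]
    (𝒦 𝒢 : Set (Set S)) (ℬ : Set (Set X)) (h : Set S → X → Z) (B : Set X) : Set Z :=
  {z | ∃ R : Finset (Set S), ↑R ⊆ RSet 𝒦 𝒢 ℬ h ∧ PairwiseDisjFinset R ∧
    ∃ x : Set S → X, (∀ ρ ∈ R, x ρ ∈ B) ∧ z = ∑ ρ ∈ R, h ρ (x ρ)}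

/-- `z` is the limit of the net `(F κ x : κ ∈ 𝒦, κ ⊆ γ)` directed by inclusion. -/
def KBelowLim {S : Type u} {X : Type v} {Z : Type w} [TopologicalSpace Z]
    (𝒦 : Set (Set S)) (γ : Set S) (F : Set S → X → Z) (x : X) (z : Z) : Prop :=
  Tendsto (fun κ : {κ : Set S // κ ∈ 𝒦 ∧ κ ⊆ γ} => F κ.1 x) atTop (nhds z)

/-- `z` is the limit of the net `(F γ' x : γ' ∈ 𝒢, α ⊆ γ')` directed by reverse inclusion. -/
def GAboveLim {S : Type u} {X : Type v} {Z : Type w} [TopologicalSpace Z]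
    (𝒢 : Set (Set S)) (α : Set S) (F : Set S → X → Z) (x : X) (z : Z) : Prop :=
  Tendsto (fun γ : {γ : Set S // γ ∈ 𝒢 ∧ α ⊆ γ} => F γ.1 x) atBot (nhds z)

/-- `h` is a Riesz measure over `(𝒦,𝒢,ℬ)`. -/
def RieszMeasure {S : Type u} {X : Type v} {Z : Type w} [AddCommMonoid X] [UniformSpace X]
    [AddCommMonoid Z] [UniformSpace Z]
    (𝒦 𝒢 : Set (Set S)) (ℬ : Set (Set X)) (h : Set S → X → Z) : Prop :=
  𝒢 ⊆ RSet 𝒦 𝒢 ℬ h ∧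
  IsSetField (RSet 𝒦 𝒢 ℬ h) ∧
  (∀ ρ₁ ∈ RSet 𝒦 𝒢 ℬ h, ∀ ρ₂ ∈ RSet 𝒦 𝒢 ℬ h, Disjoint ρ₁ ρ₂ →
      ∀ x : X, h (ρ₁ ∪ ρ₂) x = h ρ₁ x + h ρ₂ x) ∧
  (∀ γ ∈ 𝒢, ∀ x : X, KBelowLim 𝒦 γ h x (h γ x)) ∧
  (∀ α : Set S, ∀ x : X, GAboveLim 𝒢 α h x (h α x)) ∧
  UPartCont 𝒦 𝒢 ℬ h ∧ MSBounded 𝒦 𝒢 ℬ h ∧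
  ∀ B ∈ ℬ, RelComplete (VSums 𝒦 𝒢 ℬ h B)

/-- The finite disjoint family `R` refines `Q`. -/
def RefinesF {S : Type u} (R Q : Finset (Set S)) : Prop :=
  ∀ ρ ∈ R, ∃ q ∈ Q, ρ ⊆ q

/-- `R` is a finite disjoint partition of `E` by sets regular for `h`. -/
def IsPartitionOf {S : Type u} {X : Type v} {Z : Type w} [AddCommMonoid X]
    [AddCommMonoid Z] [UniformSpace Z]
    (𝒦 𝒢 : Set (Set S)) (ℬ : Set (Set X)) (h : Set S → X → Z)
    (R : Finset (Set S)) (E : Set S) : Prop :=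
  ↑R ⊆ RSet 𝒦 𝒢 ℬ h ∧ PairwiseDisjFinset R ∧ (⋃ ρ ∈ R, ρ) = E

/-- `z = ∫_E f.dμ`. -/
def IsIntegralOf {S : Type u} {X : Type v} {Z : Type w} [AddCommMonoid X]
    [AddCommMonoid Z] [UniformSpace Z]
    (𝒦 𝒢 : Set (Set S)) (ℬ : Set (Set X)) (μ : Set S → X → Z)
    (E : Set S) (f : S → X) (z : Z) : Prop :=
  ∀ V ∈ nhds z, ∃ Q : Finset (Set S), IsPartitionOf 𝒦 𝒢 ℬ μ Q E ∧
    ∀ R : Finset (Set S), IsPartitionOf 𝒦 𝒢 ℬ μ R E → RefinesF R Q →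
      ∀ s : Set S → S, (∀ ρ ∈ R, s ρ ∈ ρ) → (∑ ρ ∈ R, μ ρ (f (s ρ))) ∈ V

/-- `ℱ*(x,κ,γ,B)`. -/
def FStar {S : Type u} {X : Type v} [Zero X]
    (𝒦 𝒢 : Set (Set S)) (ℱ : Set (S → X)) (x : X) (κ γ : Set S) (B : Set X) :
    Set (S → X) :=
  {f | f ∈ FB ℱ B ∧ EqualsOver 𝒢 f x κ ∧ SupportedBy 𝒦 f γ}

/-- `τ` is the set function `τ_ℓ` generated by `ℓ` on `𝒦`. -/
def IsTau {S : Type u} {X : Type v} {Z : Type w} [AddCommMonoid X] [UniformSpace Z]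
    (𝒦 𝒢 : Set (Set S)) (ℬ : Set (Set X)) (ℱ : Set (S → X))
    (ℓ : (S → X) → Z) (τ : Set S → X → Z) : Prop :=
  ∀ κ ∈ 𝒦, ∀ x : X, ∀ V ∈ nhds (τ κ x), ∃ β ∈ 𝒢, κ ⊆ β ∧
    ℓ '' FStar 𝒦 𝒢 ℱ x κ β (BHull ℬ x) ⊆ V

/-- `ξ = ξ_ℓ` is the pointwise limit of `τ = τ_ℓ` over `𝒦⁻(γ)`. -/
def IsXi {S : Type u} {X : Type v} {Z : Type w} [TopologicalSpace Z]
    (𝒦 𝒢 : Set (Set S)) (τ ξ : Set S → X → Z) : Prop :=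
  ∀ γ ∈ 𝒢, ∀ x : X, KBelowLim 𝒦 γ τ x (ξ γ x)

/-- `ν = ν_ℓ` is the pointwise limit of `ξ = ξ_ℓ` over `𝒢⁺(α)`. -/
def IsNu {S : Type u} {X : Type v} {Z : Type w} [TopologicalSpace Z]
    (𝒢 : Set (Set S)) (ξ ν : Set S → X → Z) : Prop :=
  ∀ α : Set S, ∀ x : X, GAboveLim 𝒢 α ξ x (ν α x)

/-- `S(W,B,ℓ)`. -/
def SWB {S : Type u} {X : Type v} {Z : Type w} [AddCommMonoid X]
    (𝒦 𝒢 : Set (Set S)) (ℱ : Set (S → X)) (ℓ : (S → X) → Z)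
    (W : Set (Z × Z)) (B : Set X) : Set (Set S) :=
  {γ | γ ∈ 𝒢 ∧ ∀ f ∈ FB ℱ B, ∀ g ∈ FB ℱ B, SupportedBy 𝒦 g γ → (ℓ f, ℓ (f + g)) ∈ W}

/-- `ℓ` has the Hammerstein property relative to `ℰ`. -/
def Hammerstein {S : Type u} {X : Type v} {Z : Type w} [AddCommMonoid X] [AddCommMonoid Z]
    (𝒦 𝒢 : Set (Set S)) (ℱ : Set (S → X)) (ℓ : (S → X) → Z) : Prop :=
  ∀ f ∈ ℱ, ∀ g₁ ∈ ℱ, ∀ g₂ ∈ ℱ, ESeparated 𝒦 𝒢 g₁ g₂ →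
    ℓ (f + g₁ + g₂) + ℓ f = ℓ (f + g₁) + ℓ (f + g₂)

/-- `ℓ` is quasi-additive. -/
def QuasiAdditive {S : Type u} {X : Type v} {Z : Type w} [AddCommMonoid X]
    [AddCommMonoid Z] [UniformSpace Z]
    (ℬ : Set (Set X)) (ℱ : Set (S → X)) (ℓ : (S → X) → Z) : Prop :=
  ∀ W : Set (Z × Z), IsUnifEnt Z W → ∀ B ∈ ℬ, ∃ V : Set (Z × Z), IsUnifEnt Z V ∧
    ∀ f ∈ FB ℱ B, ∀ g ∈ FB ℱ B, ((0 : Z), ℓ g) ∈ V → (ℓ f, ℓ (f + g)) ∈ W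

/-- A perfect subset of `Z`: any function whose finite partial sums all lie in the set
is summable. -/
def PerfectSet {Z : Type w} [AddCommMonoid Z] [TopologicalSpace Z] (A : Set Z) : Prop :=
  ∀ ⦃ι : Type w⦄ (g : ι → Z), (∀ J : Finset ι, ∑ i ∈ J, g i ∈ A) → Summable g

/-- A quasi-perfect subset of `Z`: any function whose finite partial sums all lie in the
set has a Cauchy net of finite partial sums. -/
def QuasiPerfectSet {Z : Type w} [AddCommMonoid Z] [UniformSpace Z] (A : Set Z) : Prop :=
  ∀ ⦃ι : Type w⦄ (g : ι → Z), (∀ J : Finset ι, ∑ i ∈ J, g i ∈ A) →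
    Cauchy (Filter.map (fun J : Finset ι => ∑ i ∈ J, g i) Filter.atTop)

/-- `α` is `U`-small with respect to `(ℓ, B)`. -/
def USmallOp {S : Type u}{X : Type v} {Z : Type w} [AddCommMonoid X] [Zero X]
    (𝒦 : Set (Set S)) (ℱ : Set (S → X)) (ℓ : (S → X) → Z) (B : Set X)
    (U : Set (Z × Z)) (α : Set S) : Prop :=
  ∀ f ∈ FB ℱ B, ∀ g ∈ FB ℱ B, SupportedBy 𝒦 g α → (ℓ f, ℓ (f + g)) ∈ U

/-- `ℓ` is `𝒢`-bounded. -/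
def GBounded {S : Type u} {X : Type v} {Z : Type w} [AddCommMonoid X]
    [AddCommMonoid Z] [UniformSpace Z]
    (𝒦 𝒢 : Set (Set S)) (ℬ : Set (Set X)) (ℱ : Set (S → X)) (ℓ : (S → X) → Z) : Prop :=
  ∀ U : Set (Z × Z), IsUnifEnt Z U → ∀ B ∈ ℬ, ∀ K ∈ 𝒦, ∀ 𝒢' ⊆ 𝒢, K ⊆ ⋃₀ 𝒢' →
    ∃ H : Finset (Set S), ↑H ⊆ 𝒢' ∧ USmallOp 𝒦 ℱ ℓ B U (K \ ⋃ γ ∈ H, γ)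

/-- `ℬ₀` (Notation 2.2). -/
def B0 {X : Type v} [AddCommMonoid X] (ℬ : Set (Set X)) : Set (Set X) :=
  ⋂₀ {ℋ | ℋ ⊆ ℬ ∧ (∀ 𝒞 ⊆ ℋ, 𝒞.Nonempty → ⋂₀ 𝒞 ∈ ℋ) ∧ ⋂₀ ℋ = {0} ∧
      (∀ x : X, BHull ℬ x ∈ ℋ) ∧ ∀ H₁ ∈ ℋ, ∀ H₂ ∈ ℋ, BHullS ℬ (H₁ + H₂) ∈ ℋ}

/-- `ℱ₀` (Notation 2.2). -/
def F0 {S : Type u} {X : Type v} [AddCommMonoid X]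
    (ℬ : Set (Set X)) (ℱ : Set (S → X)) : Set (S → X) :=
  {f | f ∈ ℱ ∧ ∃ B ∈ B0 ℬ, Set.range f ⊆ B}

/-- The uniformity of uniform convergence on `S`, as a filter on `(S → X) × (S → X)`. -/
def UnifConvFilter (S : Type u) (X : Type v) [UniformSpace X] :
    Filter ((S → X) × (S → X)) :=
  ⨅ V ∈ uniformity X, Filter.principal {p : (S → X) × (S → X) | ∀ s : S, (p.1 s, p.2 s) ∈ V}

/-- The additional conditions of Remark 2.5.1 on a Riesz system. -/
structure Remark251 {S : Type u} {X : Type v} [TopologicalSpace S]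
    [AddCommGroup X] [Module ℝ X] [UniformSpace X]
    (𝒦 𝒢 : Set (Set S)) (ℬ : Set (Set X)) (ℱ : Set (S → X))
    (𝒯 : Filter ((S → X) × (S → X))) : Prop where
  K_closed : ∀ κ ∈ 𝒦, IsClosed κ
  G_open : ∀ γ ∈ 𝒢, IsOpen γ
  B_def : ℬ = {B : Set X | IsClosed B ∧ TotallyBounded B}
  F_sub : ∀ f ∈ ℱ, Continuous f ∧ TotallyBounded (Set.range f)
  F_module : ∀ φ : S → ℝ, Continuous φ → TotallyBounded (Set.range φ) →
      ∀ f ∈ ℱ, (fun s => φ s • f s) ∈ ℱ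
  F_tensor : ∀ x : X, ∀ φ : S → ℝ, Continuous φ → TotallyBounded (Set.range φ) →
      (∃ κ ∈ 𝒦, ∀ s ∉ κ, φ s = 0) → (fun s => φ s • x) ∈ ℱ
  T_coarser : UnifConvFilter S X ≤ 𝒯

/-- `A` is a bounded subset of the "topological vector space" `(ℱ,𝒯)`:
it is absorbed by every `𝒯`-neighbourhood of `0`. -/
def FBddIn {S : Type u} {X : Type v} [AddCommGroup X] [Module ℝ X]
    (𝒯 : Filter ((S → X) × (S → X))) (A : Set (S → X)) : Prop :=
  ∀ T ∈ 𝒯, ∃ r : ℝ, 0 < r ∧ ∀ f ∈ A, ∀ c : ℝ, |c| ≤ r → ((0 : S → X), c • f) ∈ T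

/-!
Given neighbourhoods of `τ (κ₁ ∪ κ₂) x`, `τ κ₁ x` and `τ κ₂ x`, choose disjoint members
`η₁ ⊇ κ₁`, `η₂ ⊇ κ₂` of `𝒢` inside the corresponding `β`'s and Urysohn functions
`fᵢ ∈ ℱ*(x, κᵢ, ηᵢ)`. Then `f₁ + f₂ ∈ ℱ*(x, κ₁ ∪ κ₂, β)`, and since `f₁, f₂` are
`ℰ`-separated, `ℓ (f₁ + f₂) = ℓ f₁ + ℓ f₂`. So every neighbourhood of `τ (κ₁ ∪ κ₂) x` meets
every neighbourhood of `τ κ₁ x + τ κ₂ x`, and the two agree because `Z` is Hausdorff.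
-/

section Gluing

variable {S : Type u} {X : Type v} [AddCommMonoid X]
  {𝒦 𝒢 : Set (Set S)} {ℬ : Set (Set X)} {ℱ : Set (S → X)} {𝒯 : Filter ((S → X) × (S → X))}

theorem mem_genField_of_mem_right {γ : Set S} (hγ : γ ∈ 𝒢) : γ ∈ genField 𝒦 𝒢 :=
  Set.mem_sInter.2 fun _ hℰ => hℰ.1 (Or.inr hγ)

theorem SupportedBy.mono {f : S → X} {α β : Set S} (hf : SupportedBy 𝒦 f α) (hαβ : α ⊆ β) :
    SupportedBy 𝒦 f β :=
  let ⟨μ, hμ, hμα, hf0⟩ := hf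
  ⟨μ, hμ, hμα.trans hαβ, hf0⟩

theorem ESeparated.of_disjoint {f g : S → X} {γ₁ γ₂ : Set S} (hγ₁ : γ₁ ∈ 𝒢) (hγ₂ : γ₂ ∈ 𝒢)
    (hγ : Disjoint γ₁ γ₂) (hf : SupportedBy 𝒦 f γ₁) (hg : SupportedBy 𝒦 g γ₂) :
    ESeparated 𝒦 𝒢 f g :=
  ⟨γ₁, mem_genField_of_mem_right hγ₁, γ₂, mem_genField_of_mem_right hγ₂, hγ, hf, hg⟩

theorem FStar_mono {x : X} {κ γ γ' : Set S} {B : Set X} (hγ : γ ⊆ γ') :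
    FStar 𝒦 𝒢 ℱ x κ γ B ⊆ FStar 𝒦 𝒢 ℱ x κ γ' B :=
  fun _ ⟨hfB, hfx, hfγ⟩ => ⟨hfB, hfx, hfγ.mono hγ⟩

namespace RieszSystem

variable [UniformSpace X] (hRS : RieszSystem 𝒦 𝒢 ℬ ℱ 𝒯)
include hRS

theorem exists_disjoint_G_nbhds {κ₁ κ₂ γ₁ γ₂ : Set S} (hκ₁ : κ₁ ∈ 𝒦) (hκ₂ : κ₂ ∈ 𝒦)
    (hκ : Disjoint κ₁ κ₂) (hγ₁ : γ₁ ∈ 𝒢) (hγ₂ : γ₂ ∈ 𝒢) (hκγ₁ : κ₁ ⊆ γ₁) (hκγ₂ : κ₂ ⊆ γ₂) :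
    ∃ η₁ ∈ 𝒢, ∃ η₂ ∈ 𝒢, κ₁ ⊆ η₁ ∧ η₁ ⊆ γ₁ ∧ κ₂ ⊆ η₂ ∧ η₂ ⊆ γ₂ ∧ Disjoint η₁ η₂ := by
  obtain ⟨η₁, hη₁, κ', hκ', hκη₁, hη₁κ', hκ'γ⟩ := hRS.KG_interpose κ₁ hκ₁ (γ₁ \ κ₂)
    (hRS.KG_diff κ₂ hκ₂ γ₁ hγ₁).2 (subset_sdiff.2 ⟨hκγ₁, hκ⟩)
  have hκ'κ₂ : Disjoint κ' κ₂ := (subset_sdiff.1 hκ'γ).2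
  refine ⟨η₁, hη₁, γ₂ \ κ', (hRS.KG_diff κ' hκ' γ₂ hγ₂).2, hκη₁,
    hη₁κ'.trans (hκ'γ.trans sdiff_subset), subset_sdiff.2 ⟨hκγ₂, hκ'κ₂.symm⟩, sdiff_subset, ?_⟩
  exact disjoint_sdiff_right.mono_left hη₁κ'

theorem FStar_nonempty {κ γ : Set S} (hκ : κ ∈ 𝒦) (hγ : γ ∈ 𝒢) (hκγ : κ ⊆ γ) (x : X) :
    (FStar 𝒦 𝒢 ℱ x κ γ (BHull ℬ x)).Nonempty :=
  let ⟨f, hf, hfB, hfγ, hfx⟩ := hRS.F_urysohn κ hκ γ hγ hκγ x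
  ⟨f, ⟨hf, hfB⟩, hfx, hfγ⟩

theorem add_mem_FStar_union {x : X} {κ₁ κ₂ γ₁ γ₂ : Set S} {B : Set X} {f₁ f₂ : S → X}
    (hκγ₁ : κ₁ ⊆ γ₁) (hκγ₂ : κ₂ ⊆ γ₂) (hγ : Disjoint γ₁ γ₂)
    (hf₁ : f₁ ∈ FStar 𝒦 𝒢 ℱ x κ₁ γ₁ B) (hf₂ : f₂ ∈ FStar 𝒦 𝒢 ℱ x κ₂ γ₂ B) :
    f₁ + f₂ ∈ FStar 𝒦 𝒢 ℱ x (κ₁ ∪ κ₂) (γ₁ ∪ γ₂) B := by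
  obtain ⟨⟨hf₁ℱ, hf₁B⟩, ⟨ω₁, hω₁, hκω₁, hf₁x⟩, ⟨μ₁, hμ₁, hμγ₁, hf₁0⟩⟩ := hf₁
  obtain ⟨⟨hf₂ℱ, hf₂B⟩, ⟨ω₂, hω₂, hκω₂, hf₂x⟩, ⟨μ₂, hμ₂, hμγ₂, hf₂0⟩⟩ := hf₂
  have hμ : Disjoint μ₁ μ₂ := hγ.mono hμγ₁ hμγ₂
  refine ⟨⟨hRS.F_add f₁ hf₁ℱ f₂ hf₂ℱ, ?_⟩, ?_, ?_⟩
  · rintro _ ⟨s, rfl⟩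
    by_cases hs : s ∈ μ₁
    · simpa [hf₂0 s (disjoint_left.1 hμ hs)] using hf₁B ⟨s, rfl⟩
    · simpa [hf₁0 s hs] using hf₂B ⟨s, rfl⟩
  · refine ⟨(ω₁ \ μ₂) ∪ (ω₂ \ μ₁), hRS.G_union _ (hRS.KG_diff μ₂ hμ₂ ω₁ hω₁).2 _
      (hRS.KG_diff μ₁ hμ₁ ω₂ hω₂).2, union_subset_union ?_ ?_, ?_⟩
    · exact subset_sdiff.2 ⟨hκω₁, hγ.mono hκγ₁ hμγ₂⟩
    · exact subset_sdiff.2 ⟨hκω₂, (hγ.mono hμγ₁ hκγ₂).symm⟩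
    · rintro s (⟨hs, hs'⟩ | ⟨hs, hs'⟩)
      · simp [hf₁x s hs, hf₂0 s hs']
      · simp [hf₂x s hs, hf₁0 s hs']
  · refine ⟨μ₁ ∪ μ₂, hRS.K_union μ₁ hμ₁ μ₂ hμ₂, union_subset_union hμγ₁ hμγ₂, fun s hs => ?_⟩
    rw [mem_union, not_or] at hs
    simp [hf₁0 s hs.1, hf₂0 s hs.2]

end RieszSystem

end Gluing

theorem IsTau.exists_add_mem_nhds {S : Type u} {X : Type v} {Z : Type w}
    [AddCommMonoid X] [UniformSpace X] [AddCommMonoid Z] [UniformSpace Z]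
    {𝒦 𝒢 : Set (Set S)} {ℬ : Set (Set X)} {ℱ : Set (S → X)} {𝒯 : Filter ((S → X) × (S → X))}
    {ℓ : (S → X) → Z} {τ : Set S → X → Z} (hτ : IsTau 𝒦 𝒢 ℬ ℱ ℓ τ)
    (hRS : RieszSystem 𝒦 𝒢 ℬ ℱ 𝒯) (hℓ : EAdditive 𝒦 𝒢 ℱ ℓ)
    {κ₁ κ₂ : Set S} (hκ₁ : κ₁ ∈ 𝒦) (hκ₂ : κ₂ ∈ 𝒦) (hκ : Disjoint κ₁ κ₂) (x : X)
    {V V₁ V₂ : Set Z} (hV : V ∈ 𝓝 (τ (κ₁ ∪ κ₂) x)) (hV₁ : V₁ ∈ 𝓝 (τ κ₁ x))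
    (hV₂ : V₂ ∈ 𝓝 (τ κ₂ x)) :
    ∃ z₁ ∈ V₁, ∃ z₂ ∈ V₂, z₁ + z₂ ∈ V := by
  obtain ⟨β, hβ, hκβ, hβV⟩ := hτ _ (hRS.K_union κ₁ hκ₁ κ₂ hκ₂) x V hV
  obtain ⟨β₁, hβ₁, hκβ₁, hβV₁⟩ := hτ κ₁ hκ₁ x V₁ hV₁
  obtain ⟨β₂, hβ₂, hκβ₂, hβV₂⟩ := hτ κ₂ hκ₂ x V₂ hV₂
  obtain ⟨η₁, hη₁, η₂, hη₂, hκη₁, hηβ₁, hκη₂, hηβ₂, hη⟩ :=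
    hRS.exists_disjoint_G_nbhds hκ₁ hκ₂ hκ (hRS.G_inter β hβ β₁ hβ₁)
      (hRS.G_inter β hβ β₂ hβ₂) (subset_inter (subset_union_left.trans hκβ) hκβ₁)
      (subset_inter (subset_union_right.trans hκβ) hκβ₂)
  obtain ⟨f₁, hf₁⟩ := hRS.FStar_nonempty hκ₁ hη₁ hκη₁ x
  obtain ⟨f₂, hf₂⟩ := hRS.FStar_nonempty hκ₂ hη₂ hκη₂ x
  have hsep : ESeparated 𝒦 𝒢 f₁ f₂ := .of_disjoint hη₁ hη₂ hη hf₁.2.2 hf₂.2.2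
  refine ⟨ℓ f₁, hβV₁ ⟨f₁, FStar_mono (hηβ₁.trans inter_subset_right) hf₁, rfl⟩,
    ℓ f₂, hβV₂ ⟨f₂, FStar_mono (hηβ₂.trans inter_subset_right) hf₂, rfl⟩, ?_⟩
  rw [← hℓ f₁ hf₁.1.1 f₂ hf₂.1.1 hsep]
  refine hβV ⟨f₁ + f₂, FStar_mono ?_ (hRS.add_mem_FStar_union hκη₁ hκη₂ hη hf₁ hf₂), rfl⟩
  exact union_subset (hηβ₁.trans inter_subset_left) (hηβ₂.trans inter_subset_left)

theorem stmt18_general {S : Type u} {X : Type v} {Z : Type w}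
    [AddCommMonoid X] [UniformSpace X]
    [AddCommMonoid Z] [UniformSpace Z] [T2Space Z]
    (hZadd : UniformContinuous fun p : Z × Z => p.1 + p.2)
    {𝒦 𝒢 : Set (Set S)} {ℬ : Set (Set X)} {ℱ : Set (S → X)}
    {𝒯 : Filter ((S → X) × (S → X))}
    (hRS : RieszSystem 𝒦 𝒢 ℬ ℱ 𝒯)
    (ℓ : (S → X) → Z) (hℓ : RieszIntegral 𝒦 𝒢 ℬ ℱ 𝒯 ℓ)
    (τ : Set S → X → Z) (hτ : IsTau 𝒦 𝒢 ℬ ℱ ℓ τ) :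
    ∀ κ₁ ∈ 𝒦, ∀ κ₂ ∈ 𝒦, Disjoint κ₁ κ₂ →
      ∀ x : X, τ (κ₁ ∪ κ₂) x = τ κ₁ x + τ κ₂ x := by
  intro κ₁ hκ₁ κ₂ hκ₂ hκ x
  have : ContinuousAdd Z := ⟨hZadd.continuous⟩
  refine eq_of_nhds_neBot (inf_neBot_iff.2 fun V hV V' hV' => ?_)
  obtain ⟨V₁, hV₁, V₂, hV₂, hV₁₂⟩ := mem_nhds_prod_iff.1 (tendsto_add hV')
  obtain ⟨z₁, hz₁, z₂, hz₂, hz⟩ := hτ.exists_add_mem_nhds hRS hℓ.1 hκ₁ hκ₂ hκ x hV hV₁ hV₂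
  exact ⟨z₁ + z₂, hz, hV₁₂ (mk_mem_prod hz₁ hz₂)⟩

theorem stmt18 {S : Type u} {X : Type v} {Z : Type w}
    [AddCommMonoid X] [UniformSpace X] [T2Space X]
    [AddCommMonoid Z] [UniformSpace Z] [T2Space Z]
    (hZadd : UniformContinuous fun p : Z × Z => p.1 + p.2)
    {𝒦 𝒢 : Set (Set S)} {ℬ : Set (Set X)} {ℱ : Set (S → X)}
    {𝒯 : Filter ((S → X) × (S → X))}
    (hRS : RieszSystem 𝒦 𝒢 ℬ ℱ 𝒯)
    (ℓ : (S → X) → Z) (hℓ : RieszIntegral 𝒦 𝒢 ℬ ℱ 𝒯 ℓ)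
    (τ : Set S → X → Z) (hτ : IsTau 𝒦 𝒢 ℬ ℱ ℓ τ) :
    ∀ κ₁ ∈ 𝒦, ∀ κ₂ ∈ 𝒦, Disjoint κ₁ κ₂ →
      ∀ x : X, τ (κ₁ ∪ κ₂) x = τ κ₁ x + τ κ₂ x :=
  stmt18_general hZadd hRS ℓ hℓ τ hτ
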